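/- Hodge–Helmholtz decomposition: under the Maxwell compactness property, L² q-forms decompose orthogonally as L²,q(Ω) = d D^{q-1}_c(Ω) ⊕ Δ^q₀(Ω), where the range d D^{q-1}_c(Ω) is closed (no closure needed). -/

import Mathlib

/-! The kernel of the closed operator `d` is closed, and restricting `d` to the orthogonal
complement of its kernel gives a closed operator with the same range on which the Poincaré
estimate holds. There the estimate bounds the graph norm by the norm of the image, so the
range is the image of the complete graph under an antilipschitz map, hence complete and closed.
The decomposition is then the orthogonal projection onto this closed range, whose orthogonal
complement is `Δ^q₀(Ω)` by the weak definition of `δ`. -/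

open Filter MeasureTheory RealInnerProductSpace

noncomputable section
set_option synthInstance.maxHeartbeats 1000000
set_option maxHeartbeats 1000000

/-- The Hilbert space of square-integrable `q`-forms on `Ω ⊆ ℝ^N`, identified with
`L²`-functions on `Ω` with values in `ℝ^(N choose q)` (coefficients of a `q`-form). -/
abbrev FormL2 (N q : ℕ) (Ω : Set (EuclideanSpace ℝ (Fin N))) :=
  MeasureTheory.Lp (α := EuclideanSpace ℝ (Fin N))
    (EuclideanSpace ℝ (Fin (N.choose q))) 2 (volume.restrict Ω)

namespace LinearPMap

section CommRing

variable {R E F : Type*} [CommRing R] [AddCommGroup E] [Module R E] [AddCommGroup F] [Module R F]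

def ker (f : E →ₗ.[R] F) : Submodule R E :=
  (LinearMap.ker f.toFun).map f.domain.subtype

theorem mem_ker {f : E →ₗ.[R] F} {x : E} :
    x ∈ f.ker ↔ ∃ hx : x ∈ f.domain, f ⟨x, hx⟩ = 0 := by
  simp [ker]

theorem mk_zero_mem_graph_iff {f : E →ₗ.[R] F} {x : E} :
    (x, (0 : F)) ∈ f.graph ↔ x ∈ f.ker := by
  simp [mem_ker, eq_comm]

theorem graph_domRestrict (f : E →ₗ.[R] F) (S : Submodule R E) :
    (f.domRestrict S).graph = f.graph ⊓ S.comap (LinearMap.fst R E F) := by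
  ext ⟨x, y⟩
  simp only [mem_graph_iff, Submodule.mem_inf, Submodule.mem_comap, LinearMap.fst_apply]
  constructor
  · rintro ⟨⟨z, hzS, hzf⟩, rfl, rfl⟩
    exact ⟨⟨⟨z, hzf⟩, rfl, (domRestrict_apply rfl).symm⟩, hzS⟩
  · rintro ⟨⟨⟨z, hzf⟩, rfl, rfl⟩, hzS⟩
    exact ⟨⟨z, hzS, hzf⟩, rfl, domRestrict_apply rfl⟩

variable [TopologicalSpace E] [TopologicalSpace F]

theorem IsClosed.isClosed_ker {f : E →ₗ.[R] F} (hf : f.IsClosed) :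
    _root_.IsClosed (f.ker : Set E) := by
  have hker : (f.ker : Set E) = (fun x => (x, (0 : F))) ⁻¹' f.graph := by
    ext x
    exact mk_zero_mem_graph_iff.symm
  rw [hker]
  exact hf.preimage (continuous_id.prodMk continuous_const)

theorem IsClosed.domRestrict {f : E →ₗ.[R] F} (hf : f.IsClosed) {S : Submodule R E}
    (hS : _root_.IsClosed (S : Set E)) : (f.domRestrict S).IsClosed := by
  rw [LinearPMap.IsClosed, graph_domRestrict]
  exact hf.inter (hS.preimage continuous_fst)

end CommRing

section Normed

variable {𝕜 E F : Type*} [NormedField 𝕜] [NormedAddCommGroup E] [NormedSpace 𝕜 E]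
  [NormedAddCommGroup F] [NormedSpace 𝕜 F]

theorem IsClosed.isClosed_range_of_le_mul_norm [CompleteSpace E] [CompleteSpace F]
    {f : E →ₗ.[𝕜] F} (hf : f.IsClosed) (C : ℝ) (h : ∀ x : f.domain, ‖(x : E)‖ ≤ C * ‖f x‖) :
    _root_.IsClosed (Set.range f) := by
  have : CompleteSpace f.graph := hf.completeSpace_coe
  set g : f.graph →ₗ[𝕜] F := (LinearMap.snd 𝕜 E F).comp f.graph.subtype
  have hrange : Set.range g = Set.range f := by
    ext y
    constructor
    · rintro ⟨⟨p, hp⟩, rfl⟩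
      obtain ⟨x, rfl⟩ := (mem_graph_iff' f).1 hp
      exact ⟨x, rfl⟩
    · rintro ⟨x, rfl⟩
      exact ⟨⟨_, f.mem_graph x⟩, rfl⟩
  have hbound : ∀ p : f.graph, ‖p‖ ≤ max C 1 * ‖g p‖ := by
    rintro ⟨p, hp⟩
    obtain ⟨x, rfl⟩ := (mem_graph_iff' f).1 hp
    show ‖((x : E), f x)‖ ≤ max C 1 * ‖f x‖
    rw [Prod.norm_mk]
    exact max_le ((h x).trans (by gcongr; exact le_max_left C 1))
      (le_mul_of_one_le_left (norm_nonneg _) (le_max_right C 1))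
  rw [← hrange]
  exact (AddMonoidHomClass.antilipschitz_of_bound g (K := ⟨max C 1, by positivity⟩)
    hbound).isClosed_range (uniformContinuous_snd.comp uniformContinuous_subtype_val)

end Normed

section Inner

variable {𝕜 E F : Type*} [RCLike 𝕜] [NormedAddCommGroup E] [InnerProductSpace 𝕜 E]
  [NormedAddCommGroup F] [InnerProductSpace 𝕜 F]

theorem range_domRestrict_orthogonal_ker (f : E →ₗ.[𝕜] F) [f.ker.HasOrthogonalProjection] :
    Set.range (f.domRestrict f.kerᗮ) = Set.range f := by
  ext y
  constructor
  · rintro ⟨⟨x, hx⟩, rfl⟩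
    exact ⟨⟨x, hx.2⟩, (domRestrict_apply rfl).symm⟩
  · rintro ⟨⟨x, hx⟩, rfl⟩
    obtain ⟨k, hk, z, hz, rfl⟩ := f.ker.exists_add_mem_mem_orthogonal x
    obtain ⟨hkdom, hfk⟩ := mem_ker.1 hk
    have hzdom : z ∈ f.domain := by simpa using f.domain.sub_mem hx hkdom
    have hfz : f ⟨k + z, hx⟩ = f ⟨z, hzdom⟩ := by
      rw [show (⟨k + z, hx⟩ : f.domain) = ⟨k, hkdom⟩ + ⟨z, hzdom⟩ from rfl, f.map_add, hfk,
        zero_add]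
    exact ⟨⟨z, hz, hzdom⟩, (domRestrict_apply rfl).trans hfz.symm⟩

theorem IsClosed.isClosed_range_of_le_mul_norm_of_mem_orthogonal_ker [CompleteSpace E]
    [CompleteSpace F] {f : E →ₗ.[𝕜] F} (hf : f.IsClosed) (C : ℝ)
    (h : ∀ x : f.domain, (x : E) ∈ f.kerᗮ → ‖(x : E)‖ ≤ C * ‖f x‖) :
    _root_.IsClosed (Set.range f) := by
  have : CompleteSpace f.ker := hf.isClosed_ker.completeSpace_coe
  rw [← range_domRestrict_orthogonal_ker]
  refine (hf.domRestrict f.ker.isClosed_orthogonal).isClosed_range_of_le_mul_norm C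
    fun x => ?_
  have hx : (x : E) ∈ f.kerᗮ ⊓ f.domain := x.2
  rw [domRestrict_apply (x := x) (y := ⟨x, hx.2⟩) rfl]
  exact h ⟨x, hx.2⟩ hx.1

end Inner

end LinearPMap

theorem hodge_helmholtz_decomposition_general
    {N q : ℕ} (Ω : Set (EuclideanSpace ℝ (Fin N)))
    -- the weak exterior derivative with domain `D^{q-1}_c(Ω)`
    (d : FormL2 N (q - 1) Ω →ₗ.[ℝ] FormL2 N q Ω)
    (hdc : d.IsClosed)
    -- `Δ^q₀(Ω)`: the weakly coclosed `q`-forms, i.e. the orthogonal complement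
    -- of the range of `d` (which is how the weak coderivative with this boundary
    -- condition is defined)
    (Δ₀ : Set (FormL2 N q Ω))
    (hΔ₀ : ∀ H : FormL2 N q Ω,
      H ∈ Δ₀ ↔ ∀ (E : FormL2 N (q - 1) Ω) (hE : E ∈ d.domain), ⟪d ⟨E, hE⟩, H⟫ = 0)
    -- the Poincaré estimate for `(q-1)`-forms resulting from the Maxwell
    -- compactness property
    (cp : ℝ)
    (hpoin : ∀ (E : FormL2 N (q - 1) Ω) (hE : E ∈ d.domain),
      (∀ (E' : FormL2 N (q - 1) Ω) (hE' : E' ∈ d.domain),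
        d ⟨E', hE'⟩ = 0 → ⟪E, E'⟫ = 0) →
      ‖E‖ ≤ cp * ‖d ⟨E, hE⟩‖) :
    -- the range of `d` is closed and `L²,q(Ω) = d D^{q-1}_c(Ω) ⊕ Δ^q₀(Ω)`,
    -- an orthogonal decomposition
    IsClosed {y : FormL2 N q Ω | ∃ (E : FormL2 N (q - 1) Ω) (hE : E ∈ d.domain),
        d ⟨E, hE⟩ = y} ∧
    (∀ y ∈ {y : FormL2 N q Ω | ∃ (E : FormL2 N (q - 1) Ω) (hE : E ∈ d.domain),
        d ⟨E, hE⟩ = y}, ∀ H ∈ Δ₀, ⟪y, H⟫ = 0) ∧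
    (∀ x : FormL2 N q Ω,
      ∃ y ∈ {y : FormL2 N q Ω | ∃ (E : FormL2 N (q - 1) Ω) (hE : E ∈ d.domain),
        d ⟨E, hE⟩ = y}, ∃ H ∈ Δ₀, x = y + H) := by
  set R := LinearMap.range d.toFun
  have hrange : {y | ∃ (E : FormL2 N (q - 1) Ω) (hE : E ∈ d.domain), d ⟨E, hE⟩ = y} =
      (R : Set (FormL2 N q Ω)) := by
    ext y
    simp [R]
  have hΔ₀R : Δ₀ = Rᗮ := by
    ext H
    rw [hΔ₀, SetLike.mem_coe, Submodule.mem_orthogonal]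
    constructor
    · rintro h _ ⟨⟨E, hE⟩, rfl⟩
      exact h E hE
    · exact fun h E hE => h _ ⟨⟨E, hE⟩, rfl⟩
  have hR : IsClosed (R : Set (FormL2 N q Ω)) := by
    rw [LinearMap.coe_range]
    refine hdc.isClosed_range_of_le_mul_norm_of_mem_orthogonal_ker cp fun ⟨E, hE⟩ hEK => ?_
    exact hpoin E hE fun E' hE' hdE' =>
      (d.ker.mem_orthogonal' E).1 hEK E' (LinearPMap.mem_ker.2 ⟨hE', hdE'⟩)
  have : CompleteSpace R := hR.completeSpace_coe
  rw [hrange, hΔ₀R]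
  exact ⟨hR, fun y hy H hH => Submodule.inner_right_of_mem_orthogonal hy hH,
    R.exists_add_mem_mem_orthogonal⟩

/-- Hodge–Helmholtz decomposition: let `d` be the weak exterior derivative on
`(q-1)`-forms with domain `D^{q-1}_c(Ω)` (vanishing tangential trace), a closed
operator, and let `Δ^q₀(Ω) = {H ∈ L²,q : δH = 0 weakly} = (d D^{q-1}_c(Ω))^⊥`.
Assuming the Poincaré estimate resulting from the Maxwell compactness property,
`L²` `q`-forms decompose orthogonally as `L²,q(Ω) = d D^{q-1}_c(Ω) ⊕ Δ^q₀(Ω)`,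
the range `d D^{q-1}_c(Ω)` being closed (no closure needed). -/
theorem hodge_helmholtz_decomposition
    {N q : ℕ} (Ω : Set (EuclideanSpace ℝ (Fin N)))
    (hΩo : IsOpen Ω) (hΩne : Ω.Nonempty) (hΩb : Bornology.IsBounded Ω)
    -- the weak exterior derivative with domain `D^{q-1}_c(Ω)`
    (d : FormL2 N (q - 1) Ω →ₗ.[ℝ] FormL2 N q Ω)
    (hdc : d.IsClosed) (hdd : Dense (d.domain : Set (FormL2 N (q - 1) Ω)))
    -- `Δ^q₀(Ω)`: the weakly coclosed `q`-forms, i.e. the orthogonal complement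
    -- of the range of `d` (which is how the weak coderivative with this boundary
    -- condition is defined)
    (Δ₀ : Set (FormL2 N q Ω))
    (hΔ₀ : ∀ H : FormL2 N q Ω,
      H ∈ Δ₀ ↔ ∀ (E : FormL2 N (q - 1) Ω) (hE : E ∈ d.domain), ⟪d ⟨E, hE⟩, H⟫ = 0)
    -- the Poincaré estimate for `(q-1)`-forms resulting from the Maxwell
    -- compactness property
    (cp : ℝ) (hcp : 0 < cp)
    (hpoin : ∀ (E : FormL2 N (q - 1) Ω) (hE : E ∈ d.domain),
      (∀ (E' : FormL2 N (q - 1) Ω) (hE' : E' ∈ d.domain),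
        d ⟨E', hE'⟩ = 0 → ⟪E, E'⟫ = 0) →
      ‖E‖ ≤ cp * ‖d ⟨E, hE⟩‖) :
    -- the range of `d` is closed and `L²,q(Ω) = d D^{q-1}_c(Ω) ⊕ Δ^q₀(Ω)`,
    -- an orthogonal decomposition
    IsClosed {y : FormL2 N q Ω | ∃ (E : FormL2 N (q - 1) Ω) (hE : E ∈ d.domain),
        d ⟨E, hE⟩ = y} ∧
    (∀ y ∈ {y : FormL2 N q Ω | ∃ (E : FormL2 N (q - 1) Ω) (hE : E ∈ d.domain),
        d ⟨E, hE⟩ = y}, ∀ H ∈ Δ₀, ⟪y, H⟫ = 0) ∧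
    (∀ x : FormL2 N q Ω,
      ∃ y ∈ {y : FormL2 N q Ω | ∃ (E : FormL2 N (q - 1) Ω) (hE : E ∈ d.domain),
        d ⟨E, hE⟩ = y}, ∃ H ∈ Δ₀, x = y + H) :=
  hodge_helmholtz_decomposition_general Ω d hdc Δ₀ hΔ₀ cp hpoin
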